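/- arXiv:1905.13043 — 4 statements merged into one kernel-verified Lean document; each statement's English description precedes it below -/
import Mathlib

section
/- If φ is L-smooth, the noise satisfies |f(y) − φ(y)| ≤ ε_f for all y, the norm condition ‖g(x_k) − ∇φ(x_k)‖ ≤ θ‖∇φ(x_k)‖ holds with θ ∈ [0,1/2), and the step size satisfies 0 < α_k ≤ ᾱ := 2(1 − 2θ − c₁(1−θ))/(L(1−θ)), then the relaxed Armijo condition f(x_k − α_k g(x_k)) ≤ f(x_k) − c₁ α_k ‖g(x_k)‖² + 2ε_f is satisfied. -/
open scoped RealInnerProductSpace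

/-- if `φ` is `L`-smooth, the noise is bounded by `ε_f`, the norm
condition holds with `θ ∈ [0, 1/2)`, and `0 < α ≤ ᾱ = 2(1-2θ-c₁(1-θ))/(L(1-θ))`,
then the relaxed Armijo condition is satisfied. -/
theorem relaxed_armijo_of_small_step {n : ℕ}
    (φ f : EuclideanSpace ℝ (Fin n) → ℝ)
    (gradφ : EuclideanSpace ℝ (Fin n) → EuclideanSpace ℝ (Fin n))
    (L εf c₁ θ α : ℝ) (xk g : EuclideanSpace ℝ (Fin n))
    (hL : 0 < L)
    (hsmooth : ∀ x y, φ y ≤ φ x + ⟪gradφ x, y - x⟫ + L / 2 * ‖y - x‖ ^ 2)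
    (hnoise : ∀ y, |f y - φ y| ≤ εf)
    (hεf : 0 ≤ εf)
    (hθ0 : 0 ≤ θ) (hθ : θ < 1 / 2)
    (hc₁0 : 0 < c₁) (hc₁1 : c₁ < 1)
    (hpos : 0 < 1 - 2 * θ - c₁ * (1 - θ))
    (hnorm : ‖g - gradφ xk‖ ≤ θ * ‖gradφ xk‖)
    (hα0 : 0 < α)
    (hα : α ≤ 2 * (1 - 2 * θ - c₁ * (1 - θ)) / (L * (1 - θ))) :
    f (xk - α • g) ≤ f xk - c₁ * α * ‖g‖ ^ 2 + 2 * εf := by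
  set v := gradφ xk with hv
  have h1θ : (0:ℝ) < 1 - θ := by linarith
  have hN : (0:ℝ) ≤ ‖g‖ := norm_nonneg _
  have hV : (0:ℝ) ≤ ‖v‖ := norm_nonneg _
  -- bound on ‖v‖
  have hVb : (1 - θ) * ‖v‖ ≤ ‖g‖ := by
    have h := norm_sub_norm_le v g
    rw [norm_sub_rev] at h
    nlinarith [hnorm]
  -- inner product bound
  have hCS : ⟪g - v, g⟫ ≤ θ * ‖v‖ * ‖g‖ := by
    calc ⟪g - v, g⟫ ≤ ‖g - v‖ * ‖g‖ := real_inner_le_norm _ _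
      _ ≤ θ * ‖v‖ * ‖g‖ := by nlinarith [hnorm]
  have hexp : ⟪g - v, g⟫ = ‖g‖ ^ 2 - ⟪v, g⟫ := by
    rw [inner_sub_left, real_inner_self_eq_norm_sq]
  have hig : ‖g‖ ^ 2 - θ * ‖v‖ * ‖g‖ ≤ ⟪v, g⟫ := by
    rw [hexp] at hCS; linarith
  -- smoothness at the step
  have h1 := hsmooth xk (xk - α • g)
  have hd : xk - α • g - xk = -(α • g) := by abel
  rw [hd, inner_neg_right, inner_smul_right, norm_neg, norm_smul,
    Real.norm_eq_abs, abs_of_pos hα0] at h1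
  have h1' : φ (xk - α • g) ≤ φ xk - α * ⟪v, g⟫ + L / 2 * α ^ 2 * ‖g‖ ^ 2 := by
    calc φ (xk - α • g) ≤ φ xk + -(α * ⟪v, g⟫) + L / 2 * (α * ‖g‖) ^ 2 := h1
      _ = φ xk - α * ⟪v, g⟫ + L / 2 * α ^ 2 * ‖g‖ ^ 2 := by ring
  -- step size condition: L * α * (1 - θ) / 2 ≤ 1 - 2θ - c₁(1-θ)
  have hstep : L * α * (1 - θ) ≤ 2 * (1 - 2 * θ - c₁ * (1 - θ)) := by
    have hden : 0 < L * (1 - θ) := by positivity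
    calc L * α * (1 - θ) = α * (L * (1 - θ)) := by ring
      _ ≤ (2 * (1 - 2 * θ - c₁ * (1 - θ)) / (L * (1 - θ))) * (L * (1 - θ)) := by
          apply mul_le_mul_of_nonneg_right hα hden.le
      _ = 2 * (1 - 2 * θ - c₁ * (1 - θ)) := by field_simp
  -- key inequality: α⟪v,g⟫ - L/2 α² ‖g‖² ≥ c₁ α ‖g‖²
  have hkey : c₁ * α * ‖g‖ ^ 2 ≤ α * ⟪v, g⟫ - L / 2 * α ^ 2 * ‖g‖ ^ 2 := by
    have hVb' : θ * ‖v‖ * ‖g‖ ≤ θ / (1 - θ) * ‖g‖ ^ 2 := by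
      have : ‖v‖ ≤ ‖g‖ / (1 - θ) := by
        rw [le_div_iff₀ h1θ]; nlinarith
      have h2 : θ * ‖v‖ ≤ θ * (‖g‖ / (1 - θ)) :=
        mul_le_mul_of_nonneg_left this hθ0
      calc θ * ‖v‖ * ‖g‖ ≤ θ * (‖g‖ / (1 - θ)) * ‖g‖ :=
            mul_le_mul_of_nonneg_right h2 hN
        _ = θ / (1 - θ) * ‖g‖ ^ 2 := by ring
    have hig' : (1 - θ / (1 - θ)) * ‖g‖ ^ 2 ≤ ⟪v, g⟫ := by nlinarith
    have hLα : L / 2 * α * ‖g‖ ^ 2 ≤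
        (1 - 2 * θ - c₁ * (1 - θ)) / (1 - θ) * ‖g‖ ^ 2 := by
      rw [← sub_nonneg]
      have key : (1 - 2 * θ - c₁ * (1 - θ)) / (1 - θ) * ‖g‖ ^ 2
          - L / 2 * α * ‖g‖ ^ 2
          = ((2 * (1 - 2 * θ - c₁ * (1 - θ)) - L * α * (1 - θ)) * ‖g‖ ^ 2)
            / (2 * (1 - θ)) := by
        field_simp
      rw [key]
      exact div_nonneg (mul_nonneg (by linarith) (sq_nonneg _)) (by linarith)
    have hfrac : 1 - θ / (1 - θ) = c₁ + (1 - 2 * θ - c₁ * (1 - θ)) / (1 - θ) := by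
      field_simp; ring
    rw [hfrac] at hig'
    have A := mul_le_mul_of_nonneg_left hig' hα0.le
    have B := mul_le_mul_of_nonneg_left hLα hα0.le
    calc c₁ * α * ‖g‖ ^ 2
        = α * ((c₁ + (1 - 2 * θ - c₁ * (1 - θ)) / (1 - θ)) * ‖g‖ ^ 2)
          - α * ((1 - 2 * θ - c₁ * (1 - θ)) / (1 - θ) * ‖g‖ ^ 2) := by ring
      _ ≤ α * ⟪v, g⟫ - α * (L / 2 * α * ‖g‖ ^ 2) := sub_le_sub A B
      _ = α * ⟪v, g⟫ - L / 2 * α ^ 2 * ‖g‖ ^ 2 := by ring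
  -- noise bounds
  have hn1 := abs_le.mp (hnoise (xk - α • g))
  have hn2 := abs_le.mp (hnoise xk)
  linarith [h1', hkey, hn1.2, hn2.1]
end

section
/- Under the assumptions of the relaxed Armijo line search lemma, if the accepted step size additionally satisfies α_k ≥ τᾱ for a backtracking factor τ ∈ (0,1), then the decrease φ(x_{k+1}) ≤ φ(x_k) − c₁ τ ᾱ (1−θ)² ‖∇φ(x_k)‖² + 4ε_f holds. -/
/-!
The Armijo inequality for the noisy `f` transfers to `φ` at the cost of `2 ε_f`, one `ε_f` at
each of the two points. The relative gradient error gives `‖g‖ ≥ (1 - θ) ‖∇φ(x_k)‖`, so together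
with `α ≥ τ ᾱ` the guaranteed decrease `c₁ α ‖g‖²` dominates `c₁ τ ᾱ (1 - θ)² ‖∇φ(x_k)‖²`.
-/

open scoped RealInnerProductSpace

section RelativeError

variable {E : Type*} [SeminormedAddCommGroup E] {g v : E} {θ : ℝ}

theorem one_sub_mul_norm_le_norm_of_norm_sub_le (h : ‖g - v‖ ≤ θ * ‖v‖) :
    (1 - θ) * ‖v‖ ≤ ‖g‖ := by
  have := norm_sub_norm_le v g
  rw [norm_sub_rev] at this
  linarith

theorem one_sub_sq_mul_norm_sq_le_norm_sq_of_norm_sub_le (h : ‖g - v‖ ≤ θ * ‖v‖)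
    (hθ : θ ≤ 1) : (1 - θ) ^ 2 * ‖v‖ ^ 2 ≤ ‖g‖ ^ 2 := by
  rw [← mul_pow]
  exact pow_le_pow_left₀ (by have := norm_nonneg v; nlinarith)
    (one_sub_mul_norm_le_norm_of_norm_sub_le h) 2

end RelativeError

theorem le_sub_add_of_abs_sub_le_of_le_sub_add {α : Type*} {f φ : α → ℝ} {ε d : ℝ} {x y : α}
    (hnoise : ∀ z, |f z - φ z| ≤ ε) (h : f y ≤ f x - d + 2 * ε) :
    φ y ≤ φ x - d + 4 * ε := by
  have hx := abs_le.1 (hnoise x)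
  have hy := abs_le.1 (hnoise y)
  linarith [hx.2, hy.1]

theorem armijo_decrease_phi_general {n : ℕ}
    (φ f : EuclideanSpace ℝ (Fin n) → ℝ)
    (gradφ : EuclideanSpace ℝ (Fin n) → EuclideanSpace ℝ (Fin n))
    (εf c₁ θ τ α abar : ℝ) (xk g : EuclideanSpace ℝ (Fin n))
    (hnoise : ∀ y, |f y - φ y| ≤ εf)
    (hθ : θ < 1 / 2)
    (hc₁0 : 0 < c₁)
    (hτ0 : 0 < τ)
    (habar_pos : 0 < abar)
    (hnorm : ‖g - gradφ xk‖ ≤ θ * ‖gradφ xk‖)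
    (hαlo : τ * abar ≤ α)
    (harmijo : f (xk - α • g) ≤ f xk - c₁ * α * ‖g‖ ^ 2 + 2 * εf) :
    φ (xk - α • g) ≤ φ xk - c₁ * τ * abar * (1 - θ) ^ 2 * ‖gradφ xk‖ ^ 2 + 4 * εf := by
  have hα : 0 ≤ α := (mul_pos hτ0 habar_pos).le.trans hαlo
  have hg := one_sub_sq_mul_norm_sq_le_norm_sq_of_norm_sub_le hnorm (by linarith)
  have hdecrease : c₁ * τ * abar * (1 - θ) ^ 2 * ‖gradφ xk‖ ^ 2 ≤ c₁ * α * ‖g‖ ^ 2 :=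
    calc c₁ * τ * abar * (1 - θ) ^ 2 * ‖gradφ xk‖ ^ 2
        = c₁ * (τ * abar) * ((1 - θ) ^ 2 * ‖gradφ xk‖ ^ 2) := by ring
      _ ≤ c₁ * α * ‖g‖ ^ 2 := by gcongr
  linarith [le_sub_add_of_abs_sub_le_of_le_sub_add hnoise harmijo]

/-- under the relaxed-Armijo line search hypotheses, if the accepted
step size satisfies `τᾱ ≤ α_k ≤ ᾱ`, then
`φ(x_{k+1}) ≤ φ(x_k) - c₁ τ ᾱ (1-θ)² ‖∇φ(x_k)‖² + 4 ε_f`. -/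
theorem armijo_decrease_phi {n : ℕ}
    (φ f : EuclideanSpace ℝ (Fin n) → ℝ)
    (gradφ : EuclideanSpace ℝ (Fin n) → EuclideanSpace ℝ (Fin n))
    (L εf c₁ θ τ α abar : ℝ) (xk g : EuclideanSpace ℝ (Fin n))
    (hL : 0 < L)
    (hsmooth : ∀ x y, φ y ≤ φ x + ⟪gradφ x, y - x⟫ + L / 2 * ‖y - x‖ ^ 2)
    (hnoise : ∀ y, |f y - φ y| ≤ εf)
    (hεf : 0 ≤ εf)
    (hθ0 : 0 ≤ θ) (hθ : θ < 1 / 2)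
    (hc₁0 : 0 < c₁) (hc₁1 : c₁ < 1)
    (hτ0 : 0 < τ) (hτ1 : τ < 1)
    (habar : abar = 2 * (1 - 2 * θ - c₁ * (1 - θ)) / (L * (1 - θ)))
    (habar_pos : 0 < abar)
    (hnorm : ‖g - gradφ xk‖ ≤ θ * ‖gradφ xk‖)
    (hαlo : τ * abar ≤ α) (hαhi : α ≤ abar)
    (harmijo : f (xk - α • g) ≤ f xk - c₁ * α * ‖g‖ ^ 2 + 2 * εf) :
    φ (xk - α • g) ≤ φ xk - c₁ * τ * abar * (1 - θ) ^ 2 * ‖gradφ xk‖ ^ 2 + 4 * εf :=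
  armijo_decrease_phi_general φ f gradφ εf c₁ θ τ α abar xk g hnoise hθ hc₁0 hτ0 habar_pos hnorm
    hαlo harmijo
end

section
/- Suppose the sequence z_k ≥ 0 of optimality gaps satisfies z_k − z_{k+1} ≥ η z_k² / D² − 4ε_f for all k with z_k > 0, where η = c₁ τ ᾱ (1−θ)². Fix γ ∈ (0,1). If z_i > 2D√ε_f / √(γη) for all 0 ≤ i ≤ k−1, then z_k ≤ D²/(k(1−γ)η). -/
/-- in the large-optimality-gap regime of the convex convergence
theorem, the gap decreases at a sublinear rate `z_k ≤ D²/(k(1-γ)η)`. -/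
theorem convex_sublinear_rate
    (z : ℕ → ℝ) (D η εf γ c₁ τ abar θ : ℝ) (k : ℕ)
    (hD : 0 < D) (hεf : 0 ≤ εf) (hγ0 : 0 < γ) (hγ1 : γ < 1)
    (hη : η = c₁ * τ * abar * (1 - θ) ^ 2) (hηpos : 0 < η)
    (hz_nonneg : ∀ i, 0 ≤ z i)
    (hrec : ∀ i, 0 < z i → z i - z (i + 1) ≥ η * (z i) ^ 2 / D ^ 2 - 4 * εf)
    (hk : 1 ≤ k)
    (hlarge : ∀ i < k, z i > 2 * D * Real.sqrt εf / Real.sqrt (γ * η)) :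
    z k ≤ D ^ 2 / (k * (1 - γ) * η) := by
  set c := (1 - γ) * η / D ^ 2 with hc
  have hcpos : 0 < c := div_pos (mul_pos (by linarith) hηpos) (by positivity)
  have main : ∀ n, (∀ i < n, z i > 2 * D * Real.sqrt εf / Real.sqrt (γ * η)) →
      0 < z n → (n : ℝ) * c ≤ 1 / z n := by
    intro n
    induction n with
    | zero => intro _ h; simp; positivity
    | succ m ih =>
      intro hl hzpos
      have hlm : ∀ i < m, z i > 2 * D * Real.sqrt εf / Real.sqrt (γ * η) :=
        fun i hi => hl i (Nat.lt_succ_of_lt hi)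
      have hzm : z m > 2 * D * Real.sqrt εf / Real.sqrt (γ * η) := hl m (Nat.lt_succ_self m)
      have hthr : 0 ≤ 2 * D * Real.sqrt εf / Real.sqrt (γ * η) := by positivity
      have hzm0 : 0 < z m := lt_of_le_of_lt hthr hzm
      have hγη : 0 < γ * η := mul_pos hγ0 hηpos
      have hs : 0 < Real.sqrt (γ * η) := Real.sqrt_pos.mpr hγη
      have hs2 : Real.sqrt (γ * η) ^ 2 = γ * η := Real.sq_sqrt hγη.le
      have ht2 : Real.sqrt εf ^ 2 = εf := Real.sq_sqrt hεf
      have h1 : 2 * D * Real.sqrt εf < z m * Real.sqrt (γ * η) := by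
        have := (div_lt_iff₀ hs).mp hzm
        linarith
      have hsq : 4 * εf ≤ γ * η * z m ^ 2 / D ^ 2 := by
        rw [le_div_iff₀ (by positivity : (0:ℝ) < D ^ 2)]
        have h1' := mul_self_lt_mul_self (by positivity) h1
        nlinarith [hs2, ht2]
      have hceq : c * z m ^ 2 = η * z m ^ 2 / D ^ 2 - γ * η * z m ^ 2 / D ^ 2 := by
        rw [hc]; ring
      have hstep : c * z m ^ 2 ≤ z m - z (m + 1) := by
        have := hrec m hzm0
        linarith [hceq, hsq]
      have hzm1 : 0 < z (m + 1) := hzpos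
      have h2 : z (m + 1) ≤ z m := by nlinarith
      have h5 : (1 + c * z m) * z (m + 1) ≤ z m := by nlinarith
      have key : 1 / z m + c ≤ 1 / z (m + 1) := by
        have heq : 1 / z m + c = (1 + c * z m) / z m := by
          field_simp
        rw [heq, div_le_div_iff₀ hzm0 hzm1]
        linarith
      have := ih hlm hzm0
      push_cast
      linarith
  rcases eq_or_lt_of_le (hz_nonneg k) with h0 | hpos
  · rw [← h0]
    have : (0:ℝ) < (k : ℝ) * (1 - γ) * η := by
      have hk' : (0:ℝ) < (k:ℝ) := by exact_mod_cast hk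
      exact mul_pos (mul_pos hk' (by linarith)) hηpos
    exact le_of_lt (div_pos (by positivity) this)
  · have hmain := main k hlarge hpos
    have hkpos : (0:ℝ) < (k:ℝ) := by exact_mod_cast hk
    have hkc : 0 < (k : ℝ) * c := mul_pos hkpos hcpos
    have h6 : (k : ℝ) * c * z k ≤ 1 := by
      rw [le_div_iff₀ hpos] at hmain; linarith
    have h7 : z k ≤ 1 / ((k : ℝ) * c) := by
      rw [le_div_iff₀ hkc]; linarith
    have h8 : 1 / ((k : ℝ) * c) = D ^ 2 / (k * (1 - γ) * η) := by
      rw [hc]; field_simp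
    linarith [h8 ▸ h7]
end

section
/- Let X = {x, x+σu₁, …, x+σuₙ} with ‖u_i‖ ≤ 1 for all i and the matrix Q (with rows u_iᵀ) nonsingular. If f = φ + ε with φ L-smooth and |ε| ≤ ε_f everywhere, and g(x) solves the linear interpolation system σ Q g(x) = F where F_i = f(x+σu_i) − f(x), then ‖g(x) − ∇φ(x)‖ ≤ ‖Q⁻¹‖₂ √n σ L / 2 + 2‖Q⁻¹‖₂ √n ε_f / σ. -/
open scoped RealInnerProductSpace

lemma taylor_bound' {n : ℕ} (φ : EuclideanSpace ℝ (Fin n) → ℝ)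
    (gradφ : EuclideanSpace ℝ (Fin n) → EuclideanSpace ℝ (Fin n)) (L : ℝ) (hL : 0 ≤ L)
    (hgrad : ∀ y, HasGradientAt φ (gradφ y) y)
    (hlip : LipschitzWith (Real.toNNReal L) gradφ)
    (x v : EuclideanSpace ℝ (Fin n)) :
    |φ (x + v) - φ x - ⟪gradφ x, v⟫| ≤ L * ‖v‖ ^ 2 / 2 := by
  set h : ℝ → ℝ := fun t => φ (x + t • v) - ⟪gradφ x, v⟫ * t with hh
  set h' : ℝ → ℝ := fun t => ⟪gradφ (x + t • v), v⟫ - ⟪gradφ x, v⟫ with hh'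
  have hderiv : ∀ t : ℝ, HasDerivAt h (h' t) t := by
    intro t
    have h1 : HasDerivAt (fun t : ℝ => x + t • v) v t := by
      simpa using ((hasDerivAt_id t).smul_const v).const_add x
    have h2 := ((hgrad (x + t • v)).hasFDerivAt.comp_hasDerivAt t h1)
    have h3 := h2.sub ((hasDerivAt_id t).const_mul ⟪gradφ x, v⟫)
    simp at h3
    exact h3
  have hbound : ∀ t ∈ Set.Icc (0:ℝ) 1, |h' t| ≤ L * ‖v‖ ^ 2 * t := by
    intro t ht
    have : h' t = ⟪gradφ (x + t • v) - gradφ x, v⟫ := by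
      simp [hh', inner_sub_left]
    rw [this]
    calc |⟪gradφ (x + t • v) - gradφ x, v⟫| ≤ ‖gradφ (x + t • v) - gradφ x‖ * ‖v‖ :=
          abs_real_inner_le_norm _ _
      _ ≤ (L * ‖t • v‖) * ‖v‖ := by
          apply mul_le_mul_of_nonneg_right _ (norm_nonneg v)
          have := hlip.dist_le_mul (x + t • v) x
          simpa [dist_eq_norm, Real.coe_toNNReal _ hL] using this
      _ = L * ‖v‖ ^ 2 * |t| := by
          rw [norm_smul]; simp [Real.norm_eq_abs]; ring
      _ = L * ‖v‖ ^ 2 * t := by rw [abs_of_nonneg ht.1]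
  have hcont : Continuous h' := by
    have : Continuous fun t : ℝ => gradφ (x + t • v) :=
      hlip.continuous.comp (by continuity)
    exact (Continuous.inner this continuous_const).sub continuous_const
  have key : h 1 - h 0 = ∫ t in (0:ℝ)..1, h' t :=
    (intervalIntegral.integral_eq_sub_of_hasDerivAt (fun t _ => hderiv t)
      (hcont.intervalIntegrable 0 1)).symm
  have h10 : h 1 - h 0 = φ (x + v) - φ x - ⟪gradφ x, v⟫ := by
    simp [hh]; ring
  rw [← h10, key]
  calc |∫ t in (0:ℝ)..1, h' t| ≤ |∫ t in (0:ℝ)..1, L * ‖v‖ ^ 2 * t| := by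
        rw [← Real.norm_eq_abs (∫ t in (0:ℝ)..1, h' t)]
        refine intervalIntegral.norm_integral_le_abs_of_norm_le ?_
          ((continuous_const.mul continuous_id : Continuous fun t : ℝ => (L * ‖v‖ ^ 2) * t).intervalIntegrable 0 1)
        refine (MeasureTheory.ae_restrict_iff' measurableSet_uIoc).mpr
          (Filter.Eventually.of_forall fun t ht => ?_)
        rw [Real.norm_eq_abs]
        rw [Set.uIoc_of_le zero_le_one] at ht
        exact hbound t (Set.mem_Icc_of_Ioc ht)
    _ = L * ‖v‖ ^ 2 / 2 := by
        rw [intervalIntegral.integral_const_mul, integral_id]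
        rw [abs_of_nonneg (by positivity)]
        norm_num
        ring

set_option maxHeartbeats 1000000 in
set_option synthInstance.maxHeartbeats 400000 in
/-- accuracy of the linear interpolation gradient. -/
theorem linear_interpolation_gradient_error {n : ℕ}
    (φ f ε : EuclideanSpace ℝ (Fin n) → ℝ)
    (gradφ : EuclideanSpace ℝ (Fin n) → EuclideanSpace ℝ (Fin n))
    (L εf σ : ℝ) (x g : EuclideanSpace ℝ (Fin n))
    (u : Fin n → EuclideanSpace ℝ (Fin n))
    (Q : Matrix (Fin n) (Fin n) ℝ)
    (hQ : ∀ i j, Q i j = u i j)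
    (hQinv : IsUnit Q)
    (hu : ∀ i, ‖u i‖ ≤ 1)
    (hL : 0 < L) (hσ : 0 < σ) (hεf : 0 ≤ εf)
    (hgrad : ∀ y, HasGradientAt φ (gradφ y) y)
    (hlip : LipschitzWith (Real.toNNReal L) gradφ)
    (hf : ∀ y, f y = φ y + ε y)
    (hnoise : ∀ y, |ε y| ≤ εf)
    (hinterp : ∀ i, σ * ⟪g, u i⟫ = f (x + σ • u i) - f x) :
    ‖g - gradφ x‖ ≤
      ‖Matrix.toEuclideanCLM (𝕜 := ℝ) Q⁻¹‖ * Real.sqrt n * σ * L / 2 +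
        2 * ‖Matrix.toEuclideanCLM (𝕜 := ℝ) Q⁻¹‖ * Real.sqrt n * εf / σ := by
  set r : EuclideanSpace ℝ (Fin n) := g - gradφ x with hr
  set c : ℝ := σ * L / 2 + 2 * εf / σ with hc
  have hc0 : 0 ≤ c := by positivity
  -- componentwise bound
  have hcomp : ∀ i, |⟪r, u i⟫| ≤ c := by
    intro i
    have htay := taylor_bound' φ gradφ L hL.le hgrad hlip x (σ • u i)
    have hnorm : ‖σ • u i‖ ^ 2 ≤ σ ^ 2 := by
      rw [norm_smul]
      have h1 : ‖u i‖ ^ 2 ≤ 1 := by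
        have := hu i
        nlinarith [norm_nonneg (u i)]
      calc (‖(σ:ℝ)‖ * ‖u i‖) ^ 2 = σ ^ 2 * ‖u i‖ ^ 2 := by
            rw [Real.norm_eq_abs]; rw [mul_pow, sq_abs]
        _ ≤ σ ^ 2 * 1 := by nlinarith
        _ = σ ^ 2 := by ring
    have htay2 : |φ (x + σ • u i) - φ x - ⟪gradφ x, σ • u i⟫| ≤ L * σ ^ 2 / 2 := by
      refine htay.trans ?_
      have : L * ‖σ • u i‖ ^ 2 ≤ L * σ ^ 2 := by nlinarith
      linarith
    have hεb : |ε (x + σ • u i) - ε x| ≤ 2 * εf := by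
      calc |ε (x + σ • u i) - ε x| ≤ |ε (x + σ • u i)| + |ε x| := abs_sub _ _
        _ ≤ εf + εf := add_le_add (hnoise _) (hnoise _)
        _ = 2 * εf := by ring
    have hkey : σ * ⟪r, u i⟫ =
        (φ (x + σ • u i) - φ x - ⟪gradφ x, σ • u i⟫) + (ε (x + σ • u i) - ε x) := by
      have h1 := hinterp i
      have h2 : ⟪r, u i⟫ = ⟪g, u i⟫ - ⟪gradφ x, u i⟫ := by
        rw [hr, inner_sub_left]
      have h3 : ⟪gradφ x, σ • u i⟫ = σ * ⟪gradφ x, u i⟫ := real_inner_smul_right _ _ _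
      rw [h2, h3, hf (x + σ • u i), hf x] at *
      linarith [h1]
    have habs : |σ * ⟪r, u i⟫| ≤ L * σ ^ 2 / 2 + 2 * εf := by
      rw [hkey]
      exact (abs_add_le _ _).trans (add_le_add htay2 hεb)
    have hσc : L * σ ^ 2 / 2 + 2 * εf = σ * c := by
      rw [hc]; field_simp
    have : σ * |⟪r, u i⟫| ≤ σ * c := by
      rw [← hσc]
      calc σ * |⟪r, u i⟫| = |σ * ⟪r, u i⟫| := by rw [abs_mul, abs_of_pos hσ]
        _ ≤ _ := habs
    exact le_of_mul_le_mul_left this hσ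
  -- the image under Q
  set w : EuclideanSpace ℝ (Fin n) := Matrix.toEuclideanCLM (𝕜 := ℝ) Q r with hw
  have hwcomp : ∀ i, w i = ⟪r, u i⟫ := by
    intro i
    have : w i = ∑ j, Q i j * r j := rfl
    rw [this]
    rw [real_inner_comm]
    simp only [PiLp.inner_apply, RCLike.inner_apply, conj_trivial]
    exact Finset.sum_congr rfl fun j _ => by rw [hQ, mul_comm]
  have hwnorm : ‖w‖ ≤ Real.sqrt n * c := by
    rw [EuclideanSpace.norm_eq]
    have : ∑ i, ‖w i‖ ^ 2 ≤ (n : ℝ) * c ^ 2 := by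
      calc ∑ i, ‖w i‖ ^ 2 ≤ ∑ _i : Fin n, c ^ 2 := by
            refine Finset.sum_le_sum fun i _ => ?_
            rw [hwcomp i, Real.norm_eq_abs]
            exact pow_le_pow_left₀ (abs_nonneg _) (hcomp i) 2
        _ = (n : ℝ) * c ^ 2 := by rw [Finset.sum_const, Finset.card_fin, nsmul_eq_mul]
    refine (Real.sqrt_le_sqrt this).trans (le_of_eq ?_)
    rw [Real.sqrt_mul (Nat.cast_nonneg n), Real.sqrt_sq hc0]
  -- recover r from w
  have hrw : Matrix.toEuclideanCLM (𝕜 := ℝ) Q⁻¹ w = r := by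
    rw [hw]
    have h1 : Q⁻¹ * Q = 1 :=
      Matrix.nonsing_inv_mul Q ((Matrix.isUnit_iff_isUnit_det Q).mp hQinv)
    have h2 : (Matrix.toEuclideanCLM (𝕜 := ℝ) Q⁻¹).comp (Matrix.toEuclideanCLM (𝕜 := ℝ) Q)
        = Matrix.toEuclideanCLM (𝕜 := ℝ) (Q⁻¹ * Q) := (map_mul _ _ _).symm
    calc Matrix.toEuclideanCLM (𝕜 := ℝ) Q⁻¹ (Matrix.toEuclideanCLM (𝕜 := ℝ) Q r)
        = ((Matrix.toEuclideanCLM (𝕜 := ℝ) Q⁻¹).comp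
            (Matrix.toEuclideanCLM (𝕜 := ℝ) Q)) r := rfl
      _ = Matrix.toEuclideanCLM (𝕜 := ℝ) (Q⁻¹ * Q) r := by rw [h2]
      _ = r := by rw [h1, map_one]; rfl
  have hfinal : ‖r‖ ≤ ‖Matrix.toEuclideanCLM (𝕜 := ℝ) Q⁻¹‖ * (Real.sqrt n * c) := by
    calc ‖r‖ = ‖Matrix.toEuclideanCLM (𝕜 := ℝ) Q⁻¹ w‖ := by rw [hrw]
      _ ≤ ‖Matrix.toEuclideanCLM (𝕜 := ℝ) Q⁻¹‖ * ‖w‖ := ContinuousLinearMap.le_opNorm _ _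
      _ ≤ ‖Matrix.toEuclideanCLM (𝕜 := ℝ) Q⁻¹‖ * (Real.sqrt n * c) :=
          mul_le_mul_of_nonneg_left hwnorm (norm_nonneg _)
  refine hfinal.trans (le_of_eq ?_)
  rw [hc]
  field_simp
end
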